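/- Let δ > 0, l > 0 and a₀, a₁, a₂ ∈ ℝ, and define on the closed disk D_δ ⊂ ℝ² the micromodulus c₀(ξ) = (a₀ + a₁ cos 2θ + a₂ cos 4θ) e^{−|ξ|/l}, where θ is the angle between ξ and the first coordinate axis. Set R = ∫₀^δ r³ e^{−r/l} dr. Then the components of the effective elastic tensor A_{ijkl} = (1/2) ∫_{D_δ} c₀(ξ) ξ_i ξ_j ξ_k ξ_l / |ξ|² dξ are: A_{1111} = (R/2)( (3π/4) a₀ + (π/2) a₁ + (π/8) a₂ ), A_{2222} = (R/2)( (3π/4) a₀ − (π/2) a₁ + (π/8) a₂ ), and A_{1122} = A_{1212} = (R/2)( (π/4) a₀ − (π/8) a₂ ). In particular, if a₁ = a₂ = 0 the resulting tensor is isotropic. -/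

import Mathlib

/-
In polar coordinates `ξ = r (cos φ, sin φ)` the angle `θ = arccos (ξ₀ / ‖ξ‖)` equals `|φ|`, and the
weight `w φ = a₀ + a₁ cos 2φ + a₂ cos 4φ` is even, so the integrand of every component `A_ijkl`
splits as `r³ e^{-r/l}` times `w φ cos^m φ sin^n φ`, where `m` and `n` count the indices equal to
`0` and `1`. For odd `n` the angular factor is odd and integrates to zero. For even `n` the monomial
`cos^m φ sin^n φ` is itself a combination of `1, cos 2φ, cos 4φ`, and orthogonality of the cosines
on `[-π, π]` yields the stated values; with `a₁ = a₂ = 0` they match an isotropic tensor.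
-/

open MeasureTheory Real Set

theorem intervalIntegral.integral_eq_zero_of_odd {E : Type*} [NormedAddCommGroup E]
    [NormedSpace ℝ E] {f : ℝ → E} (hf : Function.Odd f) (a : ℝ) : ∫ x in -a..a, f x = 0 := by
  have h := intervalIntegral.integral_comp_neg (a := -a) (b := a) f
  simp only [hf _, intervalIntegral.integral_neg, neg_neg] at h
  calc _ = (1 / 2 : ℝ) • ((∫ x in -a..a, f x) - -∫ x in -a..a, f x) := by module
    _ = 0 := by rw [h, sub_self, smul_zero]

theorem integral_cos_nat_mul_eq_zero {n : ℕ} (hn : n ≠ 0) : ∫ φ in -π..π, cos (n * φ) = 0 := by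
  rw [intervalIntegral.integral_comp_mul_left _ (Nat.cast_ne_zero.2 hn), integral_cos, mul_neg,
    sin_neg, sin_nat_mul_pi, neg_zero, sub_zero, smul_zero]

theorem integral_add_sum_cos_nat_mul {ι : Type*} (s : Finset ι) (c : ℝ) (b : ι → ℝ) (k : ι → ℕ)
    (hk : ∀ i ∈ s, k i ≠ 0) :
    ∫ φ in -π..π, (c + ∑ i ∈ s, b i * cos (k i * φ)) = 2 * π * c := by
  have hint : ∀ i ∈ s, IntervalIntegrable (fun φ => b i * cos (k i * φ)) volume (-π) π :=
    fun i _ => (by fun_prop : Continuous fun φ => b i * cos (k i * φ)).intervalIntegrable _ _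
  have hsum : IntervalIntegrable (fun φ => ∑ i ∈ s, b i * cos (k i * φ)) volume (-π) π :=
    (continuous_finsetSum s fun i _ => by fun_prop).intervalIntegrable _ _
  rw [intervalIntegral.integral_add intervalIntegrable_const hsum,
    intervalIntegral.integral_finsetSum hint, Finset.sum_eq_zero fun i hi => by
      rw [intervalIntegral.integral_const_mul, integral_cos_nat_mul_eq_zero (hk i hi), mul_zero]]
  simp only [intervalIntegral.integral_const, smul_eq_mul, add_zero]
  ring

theorem integral_cos_two_four_poly_mul (a₀ a₁ a₂ b₀ b₁ b₂ : ℝ) :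
    ∫ φ in -π..π, (a₀ + a₁ * cos (2 * φ) + a₂ * cos (4 * φ)) *
      (b₀ + b₁ * cos (2 * φ) + b₂ * cos (4 * φ)) = π * (2 * a₀ * b₀ + a₁ * b₁ + a₂ * b₂) := by
  have hexpand : ∀ φ, (a₀ + a₁ * cos (2 * φ) + a₂ * cos (4 * φ)) *
      (b₀ + b₁ * cos (2 * φ) + b₂ * cos (4 * φ)) =
      (a₀ * b₀ + (a₁ * b₁ + a₂ * b₂) / 2) + ∑ i : Fin 4,
        ![a₀ * b₁ + a₁ * b₀ + (a₁ * b₂ + a₂ * b₁) / 2, a₀ * b₂ + a₂ * b₀ + a₁ * b₁ / 2,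
          (a₁ * b₂ + a₂ * b₁) / 2, a₂ * b₂ / 2] i * cos ((![2, 4, 6, 8] i : ℕ) * φ) := by
    intro φ
    -- product-to-sum, checked by writing every cosine as a polynomial in `cos 2φ`
    have h4 : cos (4 * φ) = 2 * cos (2 * φ) ^ 2 - 1 := by
      rw [show 4 * φ = 2 * (2 * φ) by ring, cos_two_mul]
    have h6 : cos (6 * φ) = 4 * cos (2 * φ) ^ 3 - 3 * cos (2 * φ) := by
      rw [show 6 * φ = 3 * (2 * φ) by ring, cos_three_mul]
    have h8 : cos (8 * φ) = 2 * cos (4 * φ) ^ 2 - 1 := by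
      rw [show 8 * φ = 2 * (4 * φ) by ring, cos_two_mul]
    simp only [Fin.sum_univ_four, Matrix.cons_val, Nat.cast_ofNat]
    rw [h8, h6, h4]
    ring
  simp only [hexpand]
  rw [integral_add_sum_cos_nat_mul _ _ _ _ (by decide)]
  ring

noncomputable def angularMoment (a₀ a₁ a₂ : ℝ) (m n : ℕ) : ℝ :=
  ∫ φ in -π..π, (a₀ + a₁ * cos (2 * φ) + a₂ * cos (4 * φ)) * (cos φ ^ m * sin φ ^ n)

section angularMoment

variable {a₀ a₁ a₂ : ℝ}

theorem angularMoment_eq_of_eq {m n : ℕ} {b₀ b₁ b₂ : ℝ}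
    (hb : ∀ φ, cos φ ^ m * sin φ ^ n = b₀ + b₁ * cos (2 * φ) + b₂ * cos (4 * φ)) :
    angularMoment a₀ a₁ a₂ m n = π * (2 * a₀ * b₀ + a₁ * b₁ + a₂ * b₂) := by
  simp only [angularMoment, hb, integral_cos_two_four_poly_mul]

theorem angularMoment_of_odd {m n : ℕ} (hn : Odd n) : angularMoment a₀ a₁ a₂ m n = 0 :=
  intervalIntegral.integral_eq_zero_of_odd (fun φ => by
    simp only [mul_neg, cos_neg, sin_neg, hn.neg_pow]) π

theorem angularMoment_four_zero :
    angularMoment a₀ a₁ a₂ 4 0 = 3 * π / 4 * a₀ + π / 2 * a₁ + π / 8 * a₂ := by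
  rw [angularMoment_eq_of_eq (b₀ := 3 / 8) (b₁ := 1 / 2) (b₂ := 1 / 8) fun φ => ?_]
  · ring
  rw [show 4 * φ = 2 * (2 * φ) by ring, cos_two_mul (2 * φ), cos_two_mul]
  ring

theorem angularMoment_zero_four :
    angularMoment a₀ a₁ a₂ 0 4 = 3 * π / 4 * a₀ - π / 2 * a₁ + π / 8 * a₂ := by
  rw [angularMoment_eq_of_eq (b₀ := 3 / 8) (b₁ := -1 / 2) (b₂ := 1 / 8) fun φ => ?_]
  · ring
  rw [show 4 * φ = 2 * (2 * φ) by ring, cos_two_mul (2 * φ), cos_two_mul,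
    show sin φ ^ 4 = (sin φ ^ 2) ^ 2 by ring, sin_sq]
  ring

theorem angularMoment_two_two :
    angularMoment a₀ a₁ a₂ 2 2 = π / 4 * a₀ - π / 8 * a₂ := by
  rw [angularMoment_eq_of_eq (b₀ := 1 / 8) (b₁ := 0) (b₂ := -1 / 8) fun φ => ?_]
  · ring
  rw [show 4 * φ = 2 * (2 * φ) by ring, cos_two_mul (2 * φ), cos_two_mul, sin_sq]
  ring

end angularMoment

theorem arccos_cos_eq_abs {φ : ℝ} (h₁ : -π ≤ φ) (h₂ : φ ≤ π) : arccos (cos φ) = |φ| := by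
  rw [← cos_abs, arccos_cos (abs_nonneg φ) (abs_le.2 ⟨h₁, h₂⟩)]

theorem cos_mul_abs (k φ : ℝ) : cos (k * |φ|) = cos (k * φ) := by
  rcases abs_choice φ with h | h <;> simp [h]

theorem Fin.two_prod_four_eq_pow {R : Type*} [CommMonoid R] (x : Fin 2 → R) (i j k l : Fin 2) :
    x i * x j * x k * x l =
      x 0 ^ (4 - (i.val + j.val + k.val + l.val)) * x 1 ^ (i.val + j.val + k.val + l.val) := by
  fin_cases i <;> fin_cases j <;> fin_cases k <;> fin_cases l <;>
    simp [pow_succ, mul_assoc, mul_comm, mul_left_comm]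

theorem EuclideanSpace.norm_polar (r φ : ℝ) : ‖!₂[r * cos φ, r * sin φ]‖ = |r| := by
  rw [EuclideanSpace.norm_eq, Fin.sum_univ_two]
  simp [mul_pow, ← mul_add, Real.sqrt_sq_eq_abs]

theorem EuclideanSpace.integral_fin_two_eq_integral_prod (F : EuclideanSpace ℝ (Fin 2) → ℝ) :
    ∫ ξ, F ξ = ∫ p : ℝ × ℝ, F !₂[p.1, p.2] := by
  have e := (PiLp.volume_preserving_toLp (Fin 2)).comp
    (volume_preserving_finTwoArrow ℝ).symm
  exact (MeasurePreserving.integral_comp'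
    (f := MeasurableEquiv.finTwoArrow.symm.trans (MeasurableEquiv.toLp 2 (Fin 2 → ℝ))) e F).symm

theorem EuclideanSpace.integral_closedBall_eq_mul_of_polar {δ : ℝ} (hδ : 0 ≤ δ)
    {f : EuclideanSpace ℝ (Fin 2) → ℝ} {g h : ℝ → ℝ}
    (hf : ∀ r > 0, ∀ φ ∈ Ioo (-π) π, r * f !₂[r * cos φ, r * sin φ] = g r * h φ) :
    ∫ ξ in Metric.closedBall 0 δ, f ξ = (∫ r in 0..δ, g r) * ∫ φ in -π..π, h φ := by
  rw [← integral_indicator measurableSet_closedBall,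
    EuclideanSpace.integral_fin_two_eq_integral_prod,
    ← integral_comp_polarCoord_symm, polarCoord_target, Measure.volume_eq_prod]
  calc _ = ∫ p in Ioi 0 ×ˢ Ioo (-π) π, (Iic δ).indicator g p.1 * h p.2 ∂volume.prod volume := by
        refine setIntegral_congr_fun (measurableSet_Ioi.prod measurableSet_Ioo) ?_
        rintro ⟨r, φ⟩ ⟨hr, hφ⟩
        have hr : 0 < r := hr
        simp only [polarCoord_symm_apply, smul_eq_mul]
        by_cases hrδ : r ≤ δ
        · rw [indicator_of_mem, indicator_of_mem (show r ∈ Iic δ from hrδ), hf r hr φ hφ]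
          simpa [EuclideanSpace.norm_polar, abs_of_pos hr] using hrδ
        · rw [indicator_of_notMem, indicator_of_notMem (show r ∉ Iic δ from hrδ)] <;>
            simp_all [EuclideanSpace.norm_polar, abs_of_pos hr]
    _ = _ := by
      rw [setIntegral_prod_mul, setIntegral_indicator measurableSet_Iic, Ioi_inter_Iic,
        intervalIntegral.integral_of_le hδ, intervalIntegral.integral_of_le (by linarith [pi_pos]),
        integral_Ioc_eq_integral_Ioo, integral_Ioc_eq_integral_Ioo]

noncomputable def expMicromodulus (l a₀ a₁ a₂ : ℝ) (ξ : EuclideanSpace ℝ (Fin 2)) : ℝ :=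
  (a₀ + a₁ * cos (2 * arccos (ξ 0 / ‖ξ‖)) + a₂ * cos (4 * arccos (ξ 0 / ‖ξ‖))) * exp (-‖ξ‖ / l)

theorem expMicromodulus_polar (l a₀ a₁ a₂ : ℝ) {r φ : ℝ} (hr : 0 < r) (hφ : φ ∈ Ioo (-π) π) :
    expMicromodulus l a₀ a₁ a₂ !₂[r * cos φ, r * sin φ] =
      (a₀ + a₁ * cos (2 * φ) + a₂ * cos (4 * φ)) * exp (-r / l) := by
  have hθ : arccos (r * cos φ / r) = |φ| := by
    rw [mul_div_cancel_left₀ _ hr.ne', arccos_cos_eq_abs hφ.1.le hφ.2.le]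
  simp [expMicromodulus, EuclideanSpace.norm_polar, abs_of_pos hr, hθ, cos_mul_abs]

theorem integral_closedBall_expMicromodulus_mul_monomial {δ : ℝ} (hδ : 0 ≤ δ) (l a₀ a₁ a₂ : ℝ)
    (i j k m : Fin 2) :
    ∫ ξ in Metric.closedBall 0 δ, expMicromodulus l a₀ a₁ a₂ ξ * ξ i * ξ j * ξ k * ξ m / ‖ξ‖ ^ 2 =
      (∫ r in 0..δ, r ^ 3 * exp (-r / l)) * angularMoment a₀ a₁ a₂
        (4 - (i.val + j.val + k.val + m.val)) (i.val + j.val + k.val + m.val) := by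
  set s := i.val + j.val + k.val + m.val
  have hs : s ≤ 4 := by omega
  refine EuclideanSpace.integral_closedBall_eq_mul_of_polar hδ fun r hr φ hφ => ?_
  set ξ : EuclideanSpace ℝ (Fin 2) := !₂[r * cos φ, r * sin φ]
  have hξ : ξ i * ξ j * ξ k * ξ m = r ^ 4 * (cos φ ^ (4 - s) * sin φ ^ s) := by
    rw [Fin.two_prod_four_eq_pow (⇑ξ)]
    simp only [ξ, Matrix.cons_val_zero, Matrix.cons_val_one, mul_pow]
    rw [show r ^ 4 = r ^ (4 - s) * r ^ s by rw [← pow_add, Nat.sub_add_cancel hs]]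
    ring
  rw [show ∀ c : ℝ, c * ξ i * ξ j * ξ k * ξ m = c * (ξ i * ξ j * ξ k * ξ m) by intro c; ring, hξ,
    expMicromodulus_polar l a₀ a₁ a₂ hr hφ, EuclideanSpace.norm_polar, abs_of_pos hr]
  field_simp

theorem pd_exponential_micromodulus_tensor_2d_general
    (δ l : ℝ) (hδ : 0 < δ)
    (a₀ a₁ a₂ : ℝ)
    (θ : EuclideanSpace ℝ (Fin 2) → ℝ)
    (hθ : ∀ ξ : EuclideanSpace ℝ (Fin 2), θ ξ = Real.arccos (ξ 0 / ‖ξ‖))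
    (c₀ : EuclideanSpace ℝ (Fin 2) → ℝ)
    (hc : ∀ ξ : EuclideanSpace ℝ (Fin 2),
      c₀ ξ = (a₀ + a₁ * Real.cos (2 * θ ξ) + a₂ * Real.cos (4 * θ ξ))
        * Real.exp (-‖ξ‖ / l))
    (R : ℝ)
    (hR : R = ∫ r in (0 : ℝ)..δ, r ^ 3 * Real.exp (-r / l))
    (A : Fin 2 → Fin 2 → Fin 2 → Fin 2 → ℝ)
    (hA : ∀ i j k l', A i j k l' = (1 / 2) *
      ∫ ξ in Metric.closedBall (0 : EuclideanSpace ℝ (Fin 2)) δ,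
        c₀ ξ * ξ i * ξ j * ξ k * ξ l' / ‖ξ‖ ^ 2) :
    A 0 0 0 0 = R / 2 * (3 * Real.pi / 4 * a₀ + Real.pi / 2 * a₁ + Real.pi / 8 * a₂) ∧
    A 1 1 1 1 = R / 2 * (3 * Real.pi / 4 * a₀ - Real.pi / 2 * a₁ + Real.pi / 8 * a₂) ∧
    A 0 0 1 1 = R / 2 * (Real.pi / 4 * a₀ - Real.pi / 8 * a₂) ∧
    A 0 1 0 1 = R / 2 * (Real.pi / 4 * a₀ - Real.pi / 8 * a₂) ∧
    (a₁ = 0 → a₂ = 0 → ∃ lam mu : ℝ, ∀ i j k l',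
      A i j k l' = lam * (if i = j then (1 : ℝ) else 0) * (if k = l' then (1 : ℝ) else 0)
        + mu * ((if i = k then (1 : ℝ) else 0) * (if j = l' then (1 : ℝ) else 0)
          + (if i = l' then (1 : ℝ) else 0) * (if j = k then (1 : ℝ) else 0))) := by
  obtain rfl : c₀ = expMicromodulus l a₀ a₁ a₂ := funext fun ξ => by rw [hc, hθ]; rfl
  have hT : ∀ i j k l', A i j k l' = R / 2 * angularMoment a₀ a₁ a₂
      (4 - (i.val + j.val + k.val + l'.val)) (i.val + j.val + k.val + l'.val) := fun i j k l' => by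
    rw [hA, integral_closedBall_expMicromodulus_mul_monomial hδ.le, hR]
    ring
  refine ⟨?_, ?_, ?_, ?_, ?_⟩
  · simp [hT, angularMoment_four_zero]
  · simp [hT, angularMoment_zero_four]
  · simp [hT, angularMoment_two_two]
  · simp [hT, angularMoment_two_two]
  · rintro rfl rfl
    refine ⟨R / 2 * (π / 4 * a₀), R / 2 * (π / 4 * a₀), fun i j k l' => ?_⟩
    have h₃₁ : angularMoment a₀ 0 0 3 1 = 0 := angularMoment_of_odd (by decide)
    have h₁₃ : angularMoment a₀ 0 0 1 3 = 0 := angularMoment_of_odd (by decide)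
    fin_cases i <;> fin_cases j <;> fin_cases k <;> fin_cases l' <;>
      simp [hT, angularMoment_four_zero, angularMoment_zero_four, angularMoment_two_two, h₃₁,
        h₁₃] <;> ring

/-- For the paper's anisotropic exponential planar micromodulus
`c₀(ξ) = (a₀ + a₁ cos 2θ + a₂ cos 4θ) e^{−|ξ|/l}` on the disk `D_δ`, with
`R = ∫₀^δ r³ e^{−r/l} dr`, the components of the effective elastic tensor are
`A₁₁₁₁ = (R/2)((3π/4)a₀ + (π/2)a₁ + (π/8)a₂)`,
`A₂₂₂₂ = (R/2)((3π/4)a₀ − (π/2)a₁ + (π/8)a₂)`,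
`A₁₁₂₂ = A₁₂₁₂ = (R/2)((π/4)a₀ − (π/8)a₂)`;
in particular, if `a₁ = a₂ = 0` the tensor is isotropic. -/
theorem pd_exponential_micromodulus_tensor_2d
    (δ l : ℝ) (hδ : 0 < δ) (hl : 0 < l)
    (a₀ a₁ a₂ : ℝ)
    (θ : EuclideanSpace ℝ (Fin 2) → ℝ)
    (hθ : ∀ ξ : EuclideanSpace ℝ (Fin 2), θ ξ = Real.arccos (ξ 0 / ‖ξ‖))
    (c₀ : EuclideanSpace ℝ (Fin 2) → ℝ)
    (hc : ∀ ξ : EuclideanSpace ℝ (Fin 2),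
      c₀ ξ = (a₀ + a₁ * Real.cos (2 * θ ξ) + a₂ * Real.cos (4 * θ ξ))
        * Real.exp (-‖ξ‖ / l))
    (R : ℝ)
    (hR : R = ∫ r in (0 : ℝ)..δ, r ^ 3 * Real.exp (-r / l))
    (A : Fin 2 → Fin 2 → Fin 2 → Fin 2 → ℝ)
    (hA : ∀ i j k l', A i j k l' = (1 / 2) *
      ∫ ξ in Metric.closedBall (0 : EuclideanSpace ℝ (Fin 2)) δ,
        c₀ ξ * ξ i * ξ j * ξ k * ξ l' / ‖ξ‖ ^ 2) :
    A 0 0 0 0 = R / 2 * (3 * Real.pi / 4 * a₀ + Real.pi / 2 * a₁ + Real.pi / 8 * a₂) ∧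
    A 1 1 1 1 = R / 2 * (3 * Real.pi / 4 * a₀ - Real.pi / 2 * a₁ + Real.pi / 8 * a₂) ∧
    A 0 0 1 1 = R / 2 * (Real.pi / 4 * a₀ - Real.pi / 8 * a₂) ∧
    A 0 1 0 1 = R / 2 * (Real.pi / 4 * a₀ - Real.pi / 8 * a₂) ∧
    (a₁ = 0 → a₂ = 0 → ∃ lam mu : ℝ, ∀ i j k l',
      A i j k l' = lam * (if i = j then (1 : ℝ) else 0) * (if k = l' then (1 : ℝ) else 0)
        + mu * ((if i = k then (1 : ℝ) else 0) * (if j = l' then (1 : ℝ) else 0)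
          + (if i = l' then (1 : ℝ) else 0) * (if j = k then (1 : ℝ) else 0))) :=
  pd_exponential_micromodulus_tensor_2d_general δ l hδ a₀ a₁ a₂ θ hθ c₀ hc R hR A hA
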